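/- arXiv:2605.01348 — 4 statements merged into one kernel-verified Lean document; each statement's English description precedes it below -/
import Mathlib

section
/- The Weierstrass gap theorem: for any point P on a projective, irreducible, non-singular curve X of genus g over an algebraically closed field, the set of Weierstrass gaps at P has exactly g elements. -/
open scoped Classical

/-- Abstract divisor-theoretic data of a projective, irreducible, non-singular
algebraic curve over an algebraically closed field: the points, the function
field, principal divisors, the genus, a canonical divisor, and the dimensions
`ℓ(D)` of the Riemann–Roch spaces, together with the standard facts
(Riemann–Roch theorem, etc.) relating them. Divisors are finitely supported
`ℤ`-valued functions on the points. -/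
structure AbstractCurve where
  /-- the (closed) points of the curve -/
  Point : Type
  /-- the function field of the curve -/
  K : Type
  [fieldK : Field K]
  /-- the principal divisor `div f` of a nonzero rational function
  (with the convention `divOf 0 = 0`); its coefficient at `P` is `v_P(f)`. -/
  divOf : K → (Point →₀ ℤ)
  divOf_one : divOf 1 = 0
  divOf_mul : ∀ f g : K, f ≠ 0 → g ≠ 0 → divOf (f * g) = divOf f + divOf g
  divOf_deg_zero : ∀ f : K, f ≠ 0 → ((divOf f).sum fun _ n => n) = 0
  /-- the genus of the curve -/
  genus : ℕ
  /-- a canonical divisor -/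
  can : Point →₀ ℤ
  /-- `ell D` is the dimension `ℓ(D)` of the Riemann–Roch space
  `L(D) = {f ≠ 0 : div f + D ≥ 0} ∪ {0}`. -/
  ell : (Point →₀ ℤ) → ℕ
  deg_can : (can.sum fun _ n => n) = 2 * (genus : ℤ) - 2
  ell_can : ell can = genus
  ell_zero : ell 0 = 1
  ell_of_deg_neg : ∀ D : Point →₀ ℤ, (D.sum fun _ n => n) < 0 → ell D = 0
  /-- the Riemann–Roch theorem -/
  riemann_roch : ∀ D : Point →₀ ℤ,
    (ell D : ℤ) = (D.sum fun _ n => n) + 1 - genus + ell (can - D)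
  ell_mono : ∀ D E : Point →₀ ℤ, D ≤ E → ell D ≤ ell E
  ell_add_point_le : ∀ (D : Point →₀ ℤ) (P : Point),
    ell (D + Finsupp.single P 1) ≤ ell D + 1
  /-- `ℓ(D + P) = ℓ(D) + 1` iff some rational function attains the extra
  pole order at `P` allowed by `D + P`. -/
  ell_succ_iff : ∀ (D : Point →₀ ℤ) (P : Point),
    ell (D + Finsupp.single P 1) = ell D + 1 ↔
      ∃ f : K, f ≠ 0 ∧ 0 ≤ divOf f + D + Finsupp.single P 1 ∧
        ((divOf f + D + Finsupp.single P 1 : Point →₀ ℤ) P) = 0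
  /-- two nested Riemann–Roch spaces coincide iff they have the same dimension -/
  ell_eq_iff : ∀ D E : Point →₀ ℤ, D ≤ E →
    (ell D = ell E ↔ ∀ f : K, f ≠ 0 → 0 ≤ divOf f + E → 0 ≤ divOf f + D)

attribute [instance] AbstractCurve.fieldK

namespace AbstractCurve

variable (C : AbstractCurve)

/-- `h` is a Weierstrass non-gap at `P` : some rational function on the curve has
pole divisor exactly `h • P` (a pole of order exactly `h` at `P`, and no other pole). -/
def Nongap (P : C.Point) (h : ℕ) : Prop :=
  ∃ f : C.K, f ≠ 0 ∧ 0 ≤ C.divOf f + Finsupp.single P (h : ℤ) ∧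
    C.divOf f P = -(h : ℤ)

/-- The Weierstrass gap set at `P` : the set of natural numbers that are not
non-gaps (all of its elements are automatically positive). -/
def gapSet (P : C.Point) : Set ℕ := {l : ℕ | ¬ C.Nongap P l}

end AbstractCurve



section Aux
variable (C : AbstractCurve) (P : C.Point)

lemma deg_single (n : ℤ) : ((Finsupp.single P n).sum fun _ k => k) = n := by
  simp [Finsupp.sum_single_index]

lemma ell_single_eq (n : ℕ) (h : 2 * C.genus ≤ n + 1) :
    (C.ell (Finsupp.single P (n : ℤ)) : ℤ) = (n : ℤ) + 1 - C.genus := by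
  have hrr := C.riemann_roch (Finsupp.single P (n : ℤ))
  have hdeg : ((C.can - Finsupp.single P (n : ℤ)).sum fun _ k => k) < 0 := by
    rw [Finsupp.sum_sub_index (fun a b1 b2 => rfl)]
    rw [C.deg_can, deg_single]
    omega
  rw [C.ell_of_deg_neg _ hdeg] at hrr
  rw [deg_single] at hrr
  push_cast at hrr ⊢
  linarith

lemma single_succ (m : ℕ) :
    Finsupp.single P (((m + 1 : ℕ)) : ℤ) =
      Finsupp.single P (m : ℤ) + Finsupp.single P 1 := by
  push_cast
  rw [← Finsupp.single_add]

lemma nongap_succ_iff (m : ℕ) :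
    C.Nongap P (m + 1) ↔
      C.ell (Finsupp.single P ((m + 1 : ℕ) : ℤ)) =
        C.ell (Finsupp.single P (m : ℤ)) + 1 := by
  rw [single_succ, C.ell_succ_iff]
  unfold AbstractCurve.Nongap
  constructor
  · rintro ⟨f, hf, h1, h2⟩
    refine ⟨f, hf, ?_, ?_⟩
    · rwa [add_assoc, ← single_succ]
    · rw [add_assoc, ← single_succ]
      simp [Finsupp.add_apply, h2]
  · rintro ⟨f, hf, h1, h2⟩
    rw [add_assoc, ← single_succ] at h1 h2
    refine ⟨f, hf, h1, ?_⟩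
    simp [Finsupp.add_apply] at h2
    push_cast
    linarith

lemma nongap_zero : C.Nongap P 0 := by
  refine ⟨1, one_ne_zero, ?_, ?_⟩ <;> simp [C.divOf_one]

lemma ell_single_mono (m : ℕ) :
    C.ell (Finsupp.single P (m : ℤ)) ≤ C.ell (Finsupp.single P ((m + 1 : ℕ) : ℤ)) := by
  apply C.ell_mono
  rw [single_succ]
  exact le_add_of_nonneg_right (Finsupp.single_nonneg.2 one_pos.le)

lemma ell_single_succ_le (m : ℕ) :
    C.ell (Finsupp.single P ((m + 1 : ℕ) : ℤ)) ≤ C.ell (Finsupp.single P (m : ℤ)) + 1 := by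
  rw [single_succ]
  exact C.ell_add_point_le _ P

lemma count_nongaps (N : ℕ) :
    ((Finset.Icc 1 N).filter fun l => C.Nongap P l).card + 1 =
      C.ell (Finsupp.single P (N : ℤ)) := by
  induction N with
  | zero => simp [C.ell_zero]
  | succ N ih =>
    rw [show Finset.Icc 1 (N + 1) = insert (N + 1) (Finset.Icc 1 N) by
      ext x; simp [Finset.mem_Icc, Finset.mem_insert]; omega]
    rw [Finset.filter_insert]
    by_cases h : C.Nongap P (N + 1)
    · rw [if_pos h, Finset.card_insert_of_notMem (by simp)]
      rw [(nongap_succ_iff C P N).mp h]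
      omega
    · rw [if_neg h]
      have h1 := ell_single_mono C P N
      have h2 := ell_single_succ_le C P N
      have h3 : C.ell (Finsupp.single P ((N + 1 : ℕ) : ℤ)) ≠
          C.ell (Finsupp.single P (N : ℤ)) + 1 :=
        fun hc => h ((nongap_succ_iff C P N).mpr hc)
      omega

lemma nongap_large (l : ℕ) (h1 : 1 ≤ l) (h2 : 2 * C.genus ≤ l) : C.Nongap P l := by
  obtain ⟨m, rfl⟩ : ∃ m, l = m + 1 := ⟨l - 1, by omega⟩
  rw [nongap_succ_iff]
  have e1 := ell_single_eq C P (m + 1) (by omega)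
  have e2 := ell_single_eq C P m (by omega)
  have : (C.ell (Finsupp.single P ((m + 1 : ℕ) : ℤ)) : ℤ) =
      (C.ell (Finsupp.single P (m : ℤ)) : ℤ) + 1 := by push_cast at e1 ⊢; linarith
  exact_mod_cast this

end Aux


/-- **Weierstrass gap theorem**: at any point `P` of a projective, irreducible,
non-singular curve of genus `g` over an algebraically closed field, the set of
Weierstrass gaps at `P` has exactly `g` elements. -/
theorem weierstrass_gap_theorem (C : AbstractCurve) (P : C.Point) :
    (C.gapSet P).Finite ∧ (C.gapSet P).ncard = C.genus := by
  classical
  set g := C.genus with hg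
  have hset : C.gapSet P =
      ↑((Finset.Icc 1 (2 * g)).filter fun l => ¬ C.Nongap P l) := by
    ext l
    simp only [AbstractCurve.gapSet, Set.mem_setOf_eq, Finset.coe_filter,
      Finset.mem_Icc, Set.mem_setOf_eq]
    constructor
    · intro h
      refine ⟨⟨?_, ?_⟩, h⟩
      · by_contra hl
        exact h (by simpa [show l = 0 by omega] using nongap_zero C P)
      · by_contra hl
        exact h (nongap_large C P l (by omega) (by omega))
    · exact fun h => h.2
  have hL : C.ell (Finsupp.single P ((2 * g : ℕ) : ℤ)) = g + 1 := by
    have := ell_single_eq C P (2 * g) (by omega)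
    exact_mod_cast (by push_cast at this ⊢; linarith : (C.ell (Finsupp.single P ((2 * g : ℕ) : ℤ)) : ℤ) = (g : ℤ) + 1)
  have hcount := count_nongaps C P (2 * g)
  rw [hL] at hcount
  have hsplit := Finset.card_filter_add_card_filter_not
    (s := Finset.Icc 1 (2 * g)) (p := fun l => C.Nongap P l)
  rw [Nat.card_Icc] at hsplit
  constructor
  · rw [hset]; exact Finset.finite_toSet _
  · rw [hset, Set.ncard_coe_finset]
    omega
end

section
/- Feng–Rao bound: let C_l = C_L(D, h_l P) be a one-point AG code where h₁ = 0 < h₂ < ... enumerates the Weierstrass semigroup H(P). Define ν_l = #{(i,j) ∈ ℕ² : h_i + h_j = h_{l+1}}. If c is a codeword in C_l^⊥ ∖ C_{l+1}^⊥, then the Hamming weight of c is at least ν_l. -/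
open scoped Classical

/-- Abstract data of a projective, irreducible, non-singular algebraic curve over
a finite field `𝔽_q`, as used for algebraic geometry codes: the base finite
field `F`, the function field `K`, the points, principal divisors, the genus,
and evaluation of rational functions at (rational) points, together with the
standard facts relating them. Divisors are finitely supported `ℤ`-valued
functions on the points. -/
structure CodingCurve where
  /-- the base finite field `𝔽_q` -/
  F : Type
  [fieldF : Field F]
  [fintypeF : Fintype F]
  /-- the function field of the curve -/
  K : Type
  [fieldK : Field K]
  [algebraFK : Algebra F K]
  /-- the (closed) points of the curve -/
  Point : Type
  /-- the principal divisor `div f` of a nonzero rational function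
  (with the convention `divOf 0 = 0`); its coefficient at `P` is `v_P(f)`. -/
  divOf : K → (Point →₀ ℤ)
  divOf_one : divOf 1 = 0
  divOf_mul : ∀ f g : K, f ≠ 0 → g ≠ 0 → divOf (f * g) = divOf f + divOf g
  divOf_deg_zero : ∀ f : K, f ≠ 0 → ((divOf f).sum fun _ n => n) = 0
  divOf_algebraMap : ∀ c : F, c ≠ 0 → divOf (algebraMap F K c) = 0
  /-- membership in the Riemann–Roch space `L(G)` is closed under addition -/
  memL_add : ∀ (G : Point →₀ ℤ) (f g : K),
    (f = 0 ∨ 0 ≤ divOf f + G) → (g = 0 ∨ 0 ≤ divOf g + G) →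
      (f + g = 0 ∨ 0 ≤ divOf (f + g) + G)
  /-- membership in the Riemann–Roch space `L(G)` is closed under scalars -/
  memL_smul : ∀ (G : Point →₀ ℤ) (c : F) (f : K),
    (f = 0 ∨ 0 ≤ divOf f + G) → (c • f = 0 ∨ 0 ≤ divOf (c • f) + G)
  /-- the genus of the curve -/
  genus : ℕ
  /-- Riemann's inequality: `L(D)` contains at least `deg D + 1 - g` linearly
  independent functions. -/
  riemann_ineq : ∀ (D : Point →₀ ℤ) (N : ℕ),
    (N : ℤ) ≤ (D.sum fun _ n => n) + 1 - genus →
      ∃ s : Fin N → K, LinearIndependent F s ∧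
        ∀ i, s i = 0 ∨ 0 ≤ divOf (s i) + D
  /-- evaluation `f(P)` of a rational function at a rational point (meaningful
  when `f` is regular at `P`, i.e. `v_P(f) ≥ 0`). -/
  eval : Point → K → F
  eval_zero : ∀ P : Point, eval P 0 = 0
  eval_add : ∀ (P : Point) (f g : K),
    0 ≤ divOf f P → 0 ≤ divOf g P → eval P (f + g) = eval P f + eval P g
  eval_smul : ∀ (P : Point) (c : F) (f : K), eval P (c • f) = c * eval P f
  eval_algebraMap : ∀ (P : Point) (c : F), eval P (algebraMap F K c) = c
  /-- a nonzero function regular at `P` evaluates to `0` at `P` iff it has a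
  zero at `P`. -/
  eval_eq_zero_iff : ∀ (P : Point) (f : K), f ≠ 0 → 0 ≤ divOf f P →
    (eval P f = 0 ↔ 1 ≤ divOf f P)

attribute [instance] CodingCurve.fieldF CodingCurve.fintypeF CodingCurve.fieldK
  CodingCurve.algebraFK

namespace CodingCurve

variable (C : CodingCurve)

/-- `f` belongs to the Riemann–Roch space `L(G)`. -/
def MemL (G : C.Point →₀ ℤ) (f : C.K) : Prop :=
  f = 0 ∨ 0 ≤ C.divOf f + G

/-- The Riemann–Roch space `L(G)` as an `F`-subspace of the function field. -/
def LSub (G : C.Point →₀ ℤ) : Submodule C.F C.K where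
  carrier := {f : C.K | C.MemL G f}
  add_mem' := fun hf hg => C.memL_add G _ _ hf hg
  zero_mem' := Or.inl rfl
  smul_mem' := fun c f hf => C.memL_smul G c f hf

/-- `ℓ(G)`, the dimension of the Riemann–Roch space `L(G)` over `𝔽_q`. -/
noncomputable def ell (G : C.Point →₀ ℤ) : ℕ := Module.finrank C.F (C.LSub G)

/-- The word obtained by evaluating `f` at the points `Pt 0, ..., Pt (n-1)`. -/
def evalWord (n : ℕ) (Pt : Fin n → C.Point) (f : C.K) : Fin n → C.F :=
  fun i => C.eval (Pt i) f

end CodingCurve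

/-!
Let `f_i` have pole divisor `h_i P` and let `p, q` range over the pairs `(i, j)` with
`h_i + h_j = h_{l+1}`. The matrix `S_{p,q} = ⟨ev(f_{p.1} f_{q.2}), c⟩ = (H diag(c) H'ᵀ)_{p,q}` has
rank at most the weight of `c`. If `p.1 < q.1`, the product `f_{p.1} f_{q.2}` has pole divisor
`m P` with `m ∈ H(P)` and `m < h_{l+1}`, so `m ≤ h_l` and `S_{p,q} = 0` because `c ⊥ C_l`.
On the diagonal the pole order is exactly `h_{l+1}`; any such function spans `L(h_{l+1} P)`
modulo `L(h_l P)`, and `c` is not orthogonal to `C_{l+1}`, so these entries are nonzero.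
Hence `S` is invertible and `ν_l ≤ wt(c)`.
-/

open Matrix OrderDual

theorem Matrix.BlockTriangular.isUnit_of_injective {ι α R : Type*} [Fintype ι] [DecidableEq ι]
    [LinearOrder α] [Field R] {M : Matrix ι ι R} {b : ι → α} (hM : M.BlockTriangular b)
    (hb : Function.Injective b) (hdiag : ∀ i, M i i ≠ 0) : IsUnit M := by
  let : LinearOrder ι := LinearOrder.lift' b hb
  rw [isUnit_iff_isUnit_det, det_of_isUpperTriangular hM, isUnit_iff_ne_zero]
  exact Finset.prod_ne_zero_iff.mpr fun i _ => hdiag i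

theorem StrictMono.finite_setOf_add_eq {h : ℕ → ℕ} (hh : StrictMono h) (N : ℕ) :
    {p : ℕ × ℕ | h p.1 + h p.2 = N}.Finite :=
  ((Set.finite_Iic N).prod (Set.finite_Iic N)).subset fun p (hp : h p.1 + h p.2 = N) =>
    ⟨(hh.id_le p.1).trans (hp ▸ Nat.le_add_right _ _),
      (hh.id_le p.2).trans (hp ▸ Nat.le_add_left _ _)⟩

theorem StrictMono.le_of_mem_range_of_lt_succ {h : ℕ → ℕ} (hh : StrictMono h) {m l : ℕ}
    (hm : m ∈ Set.range h) (hlt : m < h (l + 1)) : m ≤ h l := by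
  obtain ⟨k, rfl⟩ := hm
  exact hh.monotone (Nat.lt_succ_iff.mp (hh.lt_iff_lt.mp hlt))

namespace CodingCurve

variable (C : CodingCurve)

/-- `v_Q(f) ≥ k`, with `v_Q(0) = ∞`: nothing is known about `divOf 0`. -/
def OrdGe (Q : C.Point) (k : ℤ) (f : C.K) : Prop :=
  f = 0 ∨ k ≤ C.divOf f Q

def HasPoleDivisor (P : C.Point) (m : ℕ) (f : C.K) : Prop :=
  f ≠ 0 ∧ 0 ≤ C.divOf f + Finsupp.single P (m : ℤ) ∧ C.divOf f P = -(m : ℤ)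

def weierstrassSemigroup (P : C.Point) : Set ℕ :=
  {m | ∃ f, C.HasPoleDivisor P m f}

variable {C} {P Q : C.Point} {f g : C.K} {k k' : ℤ}

theorem divOf_inv (hf : f ≠ 0) : C.divOf f⁻¹ = -C.divOf f := by
  have h := C.divOf_mul f f⁻¹ hf (inv_ne_zero hf)
  rw [mul_inv_cancel₀ hf, C.divOf_one] at h
  exact (neg_eq_of_add_eq_zero_right h.symm).symm

theorem min_le_divOf_add (hfg : f + g ≠ 0) (Q : C.Point) :
    min (C.divOf f Q) (C.divOf g Q) ≤ C.divOf (f + g) Q := by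
  have hL := (C.memL_add (-(C.divOf f ⊓ C.divOf g)) f g
    (Or.inr (by rw [← sub_eq_add_neg, sub_nonneg]; exact inf_le_left))
    (Or.inr (by rw [← sub_eq_add_neg, sub_nonneg]; exact inf_le_right))).resolve_left hfg
  have := Finsupp.le_def.mp hL Q
  simp only [Finsupp.coe_zero, Pi.zero_apply, Finsupp.add_apply, Finsupp.neg_apply,
    Finsupp.inf_apply] at this
  omega

theorem ordGe_zero : C.OrdGe Q k 0 := Or.inl rfl

theorem ordGe_algebraMap (a : C.F) : C.OrdGe Q 0 (algebraMap C.F C.K a) := by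
  by_cases ha : a = 0
  · exact Or.inl (by rw [ha, map_zero])
  · exact Or.inr (by rw [C.divOf_algebraMap a ha]; rfl)

theorem OrdGe.mono (hf : C.OrdGe Q k f) (hk : k' ≤ k) : C.OrdGe Q k' f :=
  hf.imp_right hk.trans

theorem OrdGe.add (hf : C.OrdGe Q k f) (hg : C.OrdGe Q k g) : C.OrdGe Q k (f + g) := by
  rcases hf with rfl | hf
  · rwa [zero_add]
  rcases hg with rfl | hg
  · rw [add_zero]; exact Or.inr hf
  by_cases hfg : f + g = 0
  · exact Or.inl hfg
  exact Or.inr ((le_min hf hg).trans (min_le_divOf_add hfg Q))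

theorem OrdGe.mul (hf : C.OrdGe Q k f) (hg : C.OrdGe Q k' g) : C.OrdGe Q (k + k') (f * g) := by
  by_cases hf0 : f = 0
  · rw [hf0, zero_mul]; exact ordGe_zero
  by_cases hg0 : g = 0
  · rw [hg0, mul_zero]; exact ordGe_zero
  refine Or.inr ?_
  rw [C.divOf_mul f g hf0 hg0, Finsupp.add_apply]
  exact add_le_add (hf.resolve_left hf0) (hg.resolve_left hg0)

theorem OrdGe.smul (hf : C.OrdGe Q k f) (a : C.F) : C.OrdGe Q k (a • f) := by
  simpa [Algebra.smul_def] using (ordGe_algebraMap a).mul hf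

theorem OrdGe.sub (hf : C.OrdGe Q k f) (hg : C.OrdGe Q k g) : C.OrdGe Q k (f - g) := by
  simpa [sub_eq_add_neg] using hf.add (hg.smul (-1))

theorem eval_add_of_ordGe (hf : C.OrdGe Q 0 f) (hg : C.OrdGe Q 0 g) :
    C.eval Q (f + g) = C.eval Q f + C.eval Q g := by
  rcases hf with rfl | hf
  · rw [zero_add, C.eval_zero, zero_add]
  rcases hg with rfl | hg
  · rw [add_zero, C.eval_zero, add_zero]
  exact C.eval_add Q f g hf hg

theorem eval_sub_of_ordGe (hf : C.OrdGe Q 0 f) (hg : C.OrdGe Q 0 g) :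
    C.eval Q (f - g) = C.eval Q f - C.eval Q g := by
  rw [sub_eq_add_neg, ← neg_one_smul C.F g, eval_add_of_ordGe hf (hg.smul _), C.eval_smul]
  ring

theorem eval_eq_zero_iff_ordGe (hf : C.OrdGe Q 0 f) : C.eval Q f = 0 ↔ C.OrdGe Q 1 f := by
  rcases eq_or_ne f 0 with rfl | hf0
  · exact iff_of_true (C.eval_zero Q) ordGe_zero
  rw [C.eval_eq_zero_iff Q f hf0 (hf.resolve_left hf0), OrdGe, or_iff_right hf0]

theorem ordGe_one_sub_algebraMap_eval (hf : C.OrdGe Q 0 f) :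
    C.OrdGe Q 1 (f - algebraMap C.F C.K (C.eval Q f)) := by
  rw [← eval_eq_zero_iff_ordGe (hf.sub (ordGe_algebraMap _)),
    eval_sub_of_ordGe hf (ordGe_algebraMap _), C.eval_algebraMap, sub_self]

theorem eval_mul (hf : C.OrdGe Q 0 f) (hg : C.OrdGe Q 0 g) :
    C.eval Q (f * g) = C.eval Q f * C.eval Q g := by
  set a := C.eval Q f
  set b := C.eval Q g
  have hfg : C.OrdGe Q 0 (f * g) := by simpa using hf.mul hg
  -- `f g - a b = (f - a) g + a (g - b)`
  have hvan : C.OrdGe Q 1 (f * g - algebraMap C.F C.K (a * b)) := by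
    have h₁ := (ordGe_one_sub_algebraMap_eval hf).mul hg
    have h₂ := (ordGe_algebraMap a).mul (ordGe_one_sub_algebraMap_eval hg)
    rw [add_zero] at h₁
    rw [zero_add] at h₂
    convert h₁.add h₂ using 1
    rw [map_mul]; ring
  have := (eval_eq_zero_iff_ordGe (hfg.sub (ordGe_algebraMap _))).mpr hvan
  rwa [eval_sub_of_ordGe hfg (ordGe_algebraMap _), C.eval_algebraMap, sub_eq_zero] at this

theorem exists_ordGe_sub_smul (hf : f ≠ 0) (hg : g ≠ 0) (hfg : C.divOf g Q = C.divOf f Q) :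
    ∃ a : C.F, a ≠ 0 ∧ C.OrdGe Q (C.divOf f Q + 1) (g - a • f) := by
  set q := g * f⁻¹
  have hq0 : q ≠ 0 := mul_ne_zero hg (inv_ne_zero hf)
  have hqQ : C.divOf q Q = 0 := by
    rw [C.divOf_mul g f⁻¹ hg (inv_ne_zero hf), divOf_inv hf, Finsupp.add_apply,
      Finsupp.neg_apply, hfg, add_neg_cancel]
  have hq : C.OrdGe Q 0 q := Or.inr hqQ.ge
  refine ⟨C.eval Q q, fun h0 => ?_, ?_⟩
  · have := ((eval_eq_zero_iff_ordGe hq).mp h0).resolve_left hq0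
    omega
  · have hfQ : C.OrdGe Q (C.divOf f Q) f := Or.inr le_rfl
    have := (ordGe_one_sub_algebraMap_eval hq).mul hfQ
    rw [add_comm]
    convert this using 1
    rw [sub_mul, Algebra.smul_def, inv_mul_cancel_right₀ hf]

theorem memL_iff_forall_ordGe {G : C.Point →₀ ℤ} : C.MemL G f ↔ ∀ Q, C.OrdGe Q (-G Q) f := by
  rcases eq_or_ne f 0 with rfl | hf0
  · exact iff_of_true (Or.inl rfl) fun _ => ordGe_zero
  simp only [MemL, OrdGe, hf0, false_or, Finsupp.le_def, Finsupp.coe_zero, Pi.zero_apply,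
    Finsupp.add_apply, neg_le_iff_add_nonneg]

theorem MemL.mono {D E : C.Point →₀ ℤ} (hf : C.MemL D f) (hDE : D ≤ E) : C.MemL E f := by
  rw [memL_iff_forall_ordGe] at hf ⊢
  exact fun Q => (hf Q).mono (neg_le_neg (hDE Q))

theorem MemL.mul {D E : C.Point →₀ ℤ} (hf : C.MemL D f) (hg : C.MemL E g) :
    C.MemL (D + E) (f * g) := by
  rw [memL_iff_forall_ordGe] at hf hg ⊢
  intro Q
  rw [Finsupp.add_apply, neg_add]
  exact (hf Q).mul (hg Q)

theorem memL_single_iff {m : ℤ} :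
    C.MemL (Finsupp.single P m) f ↔ (∀ Q, Q ≠ P → C.OrdGe Q 0 f) ∧ C.OrdGe P (-m) f := by
  rw [memL_iff_forall_ordGe]
  constructor
  · intro hf
    refine ⟨fun Q hQ => ?_, by simpa using hf P⟩
    simpa [Finsupp.single_eq_of_ne' hQ.symm] using hf Q
  · rintro ⟨hQ, hP⟩ Q
    rcases eq_or_ne Q P with rfl | hQP
    · simpa using hP
    · simpa [Finsupp.single_eq_of_ne' hQP.symm] using hQ Q hQP

theorem MemL.ordGe_zero_of_ne {m : ℤ} (hf : C.MemL (Finsupp.single P m) f) (hQ : Q ≠ P) :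
    C.OrdGe Q 0 f :=
  (memL_single_iff.mp hf).1 Q hQ

theorem HasPoleDivisor.memL {m : ℕ} (hf : C.HasPoleDivisor P m f) :
    C.MemL (Finsupp.single P (m : ℤ)) f :=
  Or.inr hf.2.1

theorem HasPoleDivisor.mul {a b : ℕ} (hf : C.HasPoleDivisor P a f)
    (hg : C.HasPoleDivisor P b g) : C.HasPoleDivisor P (a + b) (f * g) := by
  refine ⟨mul_ne_zero hf.1 hg.1, ?_, ?_⟩
  · have := hf.memL.mul hg.memL
    rw [← Finsupp.single_add, ← Nat.cast_add] at this
    exact this.resolve_left (mul_ne_zero hf.1 hg.1)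
  · rw [C.divOf_mul f g hf.1 hg.1, Finsupp.add_apply, hf.2.2, hg.2.2]
    push_cast; ring

theorem memL_single_of_ordGe_succ {h : ℕ → ℕ} (hh : StrictMono h)
    (hH : Set.range h = C.weierstrassSemigroup P) {l : ℕ}
    (hg : C.MemL (Finsupp.single P (h (l + 1) : ℤ)) g) (hgP : C.OrdGe P (1 - h (l + 1)) g) :
    C.MemL (Finsupp.single P (h l : ℤ)) g := by
  rcases eq_or_ne g 0 with rfl | hg0
  · exact Or.inl rfl
  rw [memL_single_iff] at hg ⊢
  refine ⟨hg.1, Or.inr ?_⟩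
  have hgP := hgP.resolve_left hg0
  rcases le_or_gt 0 (C.divOf g P) with hpos | hneg
  · omega
  set m := (-C.divOf g P).toNat
  have hm : C.HasPoleDivisor P m g := by
    refine ⟨hg0, ?_, by omega⟩
    exact (memL_single_iff.mpr ⟨hg.1, Or.inr (by omega)⟩).resolve_left hg0
  have := hh.le_of_mem_range_of_lt_succ (l := l) (hH ▸ ⟨g, hm⟩ : m ∈ Set.range h) (by omega)
  omega

section Codes

variable {n : ℕ} {Pt : Fin n → C.Point}

theorem evalWord_zero : C.evalWord n Pt 0 = 0 :=
  funext fun i => C.eval_zero (Pt i)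

theorem evalWord_smul (a : C.F) (f : C.K) : C.evalWord n Pt (a • f) = a • C.evalWord n Pt f :=
  funext fun i => C.eval_smul (Pt i) a f

theorem evalWord_sub (hf : ∀ i, C.OrdGe (Pt i) 0 f) (hg : ∀ i, C.OrdGe (Pt i) 0 g) :
    C.evalWord n Pt (f - g) = C.evalWord n Pt f - C.evalWord n Pt g :=
  funext fun i => eval_sub_of_ordGe (hf i) (hg i)

theorem evalWord_mul (hf : ∀ i, C.OrdGe (Pt i) 0 f) (hg : ∀ i, C.OrdGe (Pt i) 0 g) :
    C.evalWord n Pt (f * g) = C.evalWord n Pt f * C.evalWord n Pt g :=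
  funext fun i => eval_mul (hf i) (hg i)

variable {h : ℕ → ℕ} {l m : ℕ} {c : Fin n → C.F}

theorem dotProduct_evalWord_eq_zero_of_lt (hh : StrictMono h)
    (hH : Set.range h = C.weierstrassSemigroup P)
    (hc : ∀ f, C.MemL (Finsupp.single P (h l : ℤ)) f → C.evalWord n Pt f ⬝ᵥ c = 0)
    (hg : C.HasPoleDivisor P m g) (hm : m < h (l + 1)) : C.evalWord n Pt g ⬝ᵥ c = 0 :=
  hc g (hg.memL.mono (Finsupp.single_le_single.mpr
    (by exact_mod_cast hh.le_of_mem_range_of_lt_succ (hH ▸ ⟨g, hg⟩) hm)))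

theorem dotProduct_evalWord_ne_zero (hh : StrictMono h)
    (hH : Set.range h = C.weierstrassSemigroup P) (hne : ∀ i, Pt i ≠ P)
    (hc : ∀ f, C.MemL (Finsupp.single P (h l : ℤ)) f → C.evalWord n Pt f ⬝ᵥ c = 0)
    (hc' : ¬ ∀ f, C.MemL (Finsupp.single P (h (l + 1) : ℤ)) f → C.evalWord n Pt f ⬝ᵥ c = 0)
    (hg : C.HasPoleDivisor P (h (l + 1)) g) : C.evalWord n Pt g ⬝ᵥ c ≠ 0 := by
  push Not at hc'
  obtain ⟨f, hfL, hfc⟩ := hc'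
  have hf0 : f ≠ 0 := by
    rintro rfl
    simp [evalWord_zero] at hfc
  have hfP : C.divOf f P = -(h (l + 1) : ℤ) := by
    by_contra hlt
    have := ((memL_single_iff.mp hfL).2).resolve_left hf0
    exact hfc (hc f (memL_single_of_ordGe_succ hh hH hfL (Or.inr (by omega))))
  obtain ⟨a, ha, hga⟩ := exists_ordGe_sub_smul hf0 hg.1 (hg.2.2.trans hfP.symm)
  have hgafL : C.MemL (Finsupp.single P (h (l + 1) : ℤ)) (g - a • f) :=
    (C.LSub _).sub_mem hg.memL ((C.LSub _).smul_mem a hfL)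
  have hzero := hc _
    (memL_single_of_ordGe_succ hh hH hgafL (by rwa [hfP, neg_add_eq_sub] at hga))
  rw [evalWord_sub (fun i => hg.memL.ordGe_zero_of_ne (hne i))
    (fun i => (hfL.ordGe_zero_of_ne (hne i)).smul a), evalWord_smul, sub_dotProduct,
    smul_dotProduct, sub_eq_zero] at hzero
  rw [hzero, smul_eq_mul]
  exact mul_ne_zero ha hfc

variable (C) in
def syndromeMatrix {ι : Type*} (Pt : Fin n → C.Point) (c : Fin n → C.F) (u v : ι → C.K) :
    Matrix ι ι C.F :=
  (Matrix.of fun i k => C.eval (Pt k) (u i)) * diagonal c *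
    (Matrix.of fun j k => C.eval (Pt k) (v j))ᵀ

theorem syndromeMatrix_apply {ι : Type*} {u v : ι → C.K} (hu : ∀ i k, C.OrdGe (Pt k) 0 (u i))
    (hv : ∀ j k, C.OrdGe (Pt k) 0 (v j)) (i j : ι) :
    C.syndromeMatrix Pt c u v i j = C.evalWord n Pt (u i * v j) ⬝ᵥ c := by
  rw [syndromeMatrix, Matrix.mul_apply, evalWord_mul (hu i) (hv j)]
  refine Finset.sum_congr rfl fun k _ => ?_
  rw [mul_diagonal, transpose_apply]
  exact mul_right_comm _ _ _

theorem rank_syndromeMatrix_le {ι : Type*} [Fintype ι] (u v : ι → C.K) :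
    (C.syndromeMatrix Pt c u v).rank ≤ Fintype.card {k // c k ≠ 0} :=
  ((rank_mul_le_left _ _).trans (rank_mul_le_right _ _)).trans (rank_diagonal c).le

/-- Ordered by `i`, the matrix is triangular with nonzero diagonal. -/
theorem isUnit_syndromeMatrix (hh : StrictMono h)
    (hH : Set.range h = C.weierstrassSemigroup P) (hne : ∀ i, Pt i ≠ P)
    (hc : ∀ f, C.MemL (Finsupp.single P (h l : ℤ)) f → C.evalWord n Pt f ⬝ᵥ c = 0)
    (hc' : ¬ ∀ f, C.MemL (Finsupp.single P (h (l + 1) : ℤ)) f → C.evalWord n Pt f ⬝ᵥ c = 0)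
    {f : ℕ → C.K} (hf : ∀ i, C.HasPoleDivisor P (h i) (f i))
    [Fintype {p : ℕ × ℕ | h p.1 + h p.2 = h (l + 1)}] :
    IsUnit (C.syndromeMatrix Pt c (fun p : {p : ℕ × ℕ | h p.1 + h p.2 = h (l + 1)} => f p.1.1)
      (fun p => f p.1.2)) := by
  have hreg : ∀ j k, C.OrdGe (Pt k) 0 (f j) := fun j k => (hf j).memL.ordGe_zero_of_ne (hne k)
  have hsum (p : {p : ℕ × ℕ | h p.1 + h p.2 = h (l + 1)}) : h p.1.1 + h p.1.2 = h (l + 1) := p.2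
  refine BlockTriangular.isUnit_of_injective (b := fun p => toDual p.1.1)
    (fun p q hpq => ?_) (fun p q hpq => ?_) (fun p => ?_)
  · have := hh (show p.1.1 < q.1.1 from hpq)
    rw [syndromeMatrix_apply (fun _ => hreg _) (fun _ => hreg _)]
    exact dotProduct_evalWord_eq_zero_of_lt hh hH hc ((hf _).mul (hf _))
      (by linarith [hsum p, hsum q])
  · have h₁ : p.1.1 = q.1.1 := hpq
    have h₂ : h p.1.2 = h q.1.2 := by linarith [hsum p, hsum q, congrArg h h₁]
    exact Subtype.ext (Prod.ext h₁ (hh.injective h₂))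
  · rw [syndromeMatrix_apply (fun _ => hreg _) (fun _ => hreg _)]
    have hp := (hf p.1.1).mul (hf p.1.2)
    rw [hsum p] at hp
    exact dotProduct_evalWord_ne_zero hh hH hne hc hc' hp

end Codes

end CodingCurve

theorem feng_rao_bound_general (C : CodingCurve) (P : C.Point)
    (h : ℕ → ℕ) (hmono : StrictMono h)
    (hrange : ∀ m : ℕ,
      (∃ f : C.K, f ≠ 0 ∧ 0 ≤ C.divOf f + Finsupp.single P (m : ℤ) ∧
          C.divOf f P = -(m : ℤ)) ↔ m ∈ Set.range h)
    (n : ℕ) (Pt : Fin n → C.Point)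
    (hne : ∀ i, Pt i ≠ P) (l : ℕ) (c : Fin n → C.F)
    (hc : ∀ f : C.K, C.MemL (Finsupp.single P (h l : ℤ)) f →
      ∑ i, C.eval (Pt i) f * c i = 0)
    (hc' : ¬ ∀ f : C.K, C.MemL (Finsupp.single P (h (l + 1) : ℤ)) f →
      ∑ i, C.eval (Pt i) f * c i = 0) :
    ({p : ℕ × ℕ | h p.1 + h p.2 = h (l + 1)} : Set (ℕ × ℕ)).ncard ≤
      ({i : Fin n | c i ≠ 0} : Set (Fin n)).ncard := by
  have hH : Set.range h = C.weierstrassSemigroup P := Set.ext fun m => (hrange m).symm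
  choose f hf using fun i => (hH ▸ Set.mem_range_self i : h i ∈ C.weierstrassSemigroup P)
  have : Fintype {p : ℕ × ℕ | h p.1 + h p.2 = h (l + 1)} :=
    (hmono.finite_setOf_add_eq _).fintype
  calc _ = Fintype.card {p : ℕ × ℕ | h p.1 + h p.2 = h (l + 1)} :=
        (Nat.card_coe_set_eq _).symm.trans Nat.card_eq_fintype_card
    _ = (C.syndromeMatrix Pt c (fun p : {p : ℕ × ℕ | h p.1 + h p.2 = h (l + 1)} => f p.1.1)
          (fun p => f p.1.2)).rank :=
        (rank_of_isUnit _ (CodingCurve.isUnit_syndromeMatrix hmono hH hne hc hc' hf)).symm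
    _ ≤ Fintype.card {k // c k ≠ 0} := CodingCurve.rank_syndromeMatrix_le _ _
    _ = _ := Nat.card_eq_fintype_card.symm.trans (Nat.card_coe_set_eq {k | c k ≠ 0})

/-- **Feng–Rao bound.** Let `P` be a rational point of a curve over `𝔽_q`, and
let `h 0 = 0 < h 1 < h 2 < ...` enumerate the Weierstrass semigroup `H(P)`
(the set of `m` such that some rational function has pole divisor exactly
`m • P`).  Let `C_l = C_L(D, h_l • P)` be the one-point AG code obtained by
evaluating `L(h_l • P)` at `n` distinct rational points `Pt i ≠ P`, and let
`ν_l = #{(i,j) ∈ ℕ² : h i + h j = h (l+1)}`.  If `c` is a codeword in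
`C_l^⊥ ∖ C_{l+1}^⊥`, then the Hamming weight of `c` is at least `ν_l`. -/
theorem feng_rao_bound (C : CodingCurve) (P : C.Point)
    (h : ℕ → ℕ) (hmono : StrictMono h)
    (hrange : ∀ m : ℕ,
      (∃ f : C.K, f ≠ 0 ∧ 0 ≤ C.divOf f + Finsupp.single P (m : ℤ) ∧
          C.divOf f P = -(m : ℤ)) ↔ m ∈ Set.range h)
    (n : ℕ) (Pt : Fin n → C.Point) (hPt : Function.Injective Pt)
    (hne : ∀ i, Pt i ≠ P) (l : ℕ) (c : Fin n → C.F)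
    (hc : ∀ f : C.K, C.MemL (Finsupp.single P (h l : ℤ)) f →
      ∑ i, C.eval (Pt i) f * c i = 0)
    (hc' : ¬ ∀ f : C.K, C.MemL (Finsupp.single P (h (l + 1) : ℤ)) f →
      ∑ i, C.eval (Pt i) f * c i = 0) :
    ({p : ℕ × ℕ | h p.1 + h p.2 = h (l + 1)} : Set (ℕ × ℕ)).ncard ≤
      ({i : Fin n | c i ≠ 0} : Set (Fin n)).ncard :=
  feng_rao_bound_general C P h hmono hrange n Pt hne l c hc hc'
end

section
/- The Feng–Rao designed minimum distance improves on the Goppa bound: with ν_m = #{(i,j) : h_i + h_j = h_{m+1}} for the Weierstrass semigroup H(P) = {h₁ = 0 < h₂ < ...} of a point P on a curve of genus g, one has d_ORD(C_l) := min{ν_m : m ≥ l} ≥ h_l − 2g + 2. -/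
/-- The Feng–Rao designed minimum distance improves on the Goppa bound.
Let `S ⊆ ℕ` be the Weierstrass semigroup `H(P)` of a point `P` on a curve of
genus `g`: a numerical semigroup (containing `0`, closed under addition) whose
complement in `ℕ` has exactly `g` elements, enumerated increasingly as
`h 0 = 0 < h 1 < h 2 < ...`.  For `m : ℕ` let
`ν_m = #{(i,j) : h i + h j = h (m+1)}`.  Then
`d_ORD(C_l) = min {ν_m : m ≥ l} ≥ h l - 2g + 2`, i.e. every `ν_m` with `m ≥ l`
is at least `h l - 2g + 2`. -/
theorem feng_rao_improves_goppa (S : Set ℕ) (g : ℕ)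
    (h0 : 0 ∈ S) (hadd : ∀ a b : ℕ, a ∈ S → b ∈ S → a + b ∈ S)
    (hfin : (Sᶜ : Set ℕ).Finite) (hg : (Sᶜ : Set ℕ).ncard = g)
    (h : ℕ → ℕ) (hmono : StrictMono h) (hrange : Set.range h = S)
    (l : ℕ) :
    ∀ m : ℕ, l ≤ m →
      (h l : ℤ) - 2 * g + 2 ≤
        ({p : ℕ × ℕ | h p.1 + h p.2 = h (m + 1)} : Set (ℕ × ℕ)).ncard := by
  classical
  intro m hm
  set n := h (m + 1) with hn
  have hgaps : hfin.toFinset.card = g := by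
    rw [← hg, Set.ncard_eq_toFinset_card _ hfin]
  set T : Finset ℕ :=
    (Finset.range (n + 1)).filter (fun a => a ∈ S ∧ n - a ∈ S) with hT
  -- bound on bad sets
  have hB1 : ((Finset.range (n + 1)).filter (fun a => a ∉ S)).card ≤ g := by
    rw [← hgaps]
    apply Finset.card_le_card
    intro a ha
    simp only [Finset.mem_filter] at ha
    simpa [Set.Finite.mem_toFinset] using ha.2
  have hB2 : ((Finset.range (n + 1)).filter (fun a => n - a ∉ S)).card ≤ g := by
    rw [← hgaps]
    calc ((Finset.range (n + 1)).filter (fun a => n - a ∉ S)).card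
        = (((Finset.range (n + 1)).filter (fun a => n - a ∉ S)).image
            (fun a => n - a)).card := by
          rw [Finset.card_image_of_injOn]
          intro a ha b hb hab
          simp only [Finset.coe_filter, Set.mem_setOf_eq, Finset.mem_range] at ha hb
          have hab' : n - a = n - b := hab
          omega
      _ ≤ hfin.toFinset.card := by
          apply Finset.card_le_card
          intro x hx
          simp only [Finset.mem_image, Finset.mem_filter, Finset.mem_range] at hx
          obtain ⟨a, ⟨_, has⟩, rfl⟩ := hx
          simpa [Set.Finite.mem_toFinset] using has
  have hTcard : (n + 1 : ℤ) - 2 * g ≤ T.card := by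
    have hsub : Finset.range (n + 1) ⊆
        T ∪ (Finset.range (n + 1)).filter (fun a => a ∉ S)
          ∪ (Finset.range (n + 1)).filter (fun a => n - a ∉ S) := by
      intro a ha
      by_cases h1 : a ∈ S
      · by_cases h2 : n - a ∈ S
        · exact Finset.mem_union_left _ (Finset.mem_union_left _
            (by simp [hT, Finset.mem_filter, ha, h1, h2]))
        · exact Finset.mem_union_right _ (by simp [Finset.mem_filter, ha, h2])
      · exact Finset.mem_union_left _ (Finset.mem_union_right _
          (by simp [Finset.mem_filter, ha, h1]))
    have h1 := Finset.card_le_card hsub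
    have h2 := Finset.card_union_le
      (T ∪ (Finset.range (n + 1)).filter (fun a => a ∉ S))
      ((Finset.range (n + 1)).filter (fun a => n - a ∉ S))
    have h3 := Finset.card_union_le T
      ((Finset.range (n + 1)).filter (fun a => a ∉ S))
    have hr : (Finset.range (n + 1)).card = n + 1 := Finset.card_range _
    omega
  -- the target set is finite
  have hfin2 : ({p : ℕ × ℕ | h p.1 + h p.2 = n} : Set (ℕ × ℕ)).Finite := by
    apply Set.Finite.subset ((Set.finite_Iic (m + 1)).prod (Set.finite_Iic (m + 1)))
    intro p hp
    simp only [Set.mem_setOf_eq] at hp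
    have h1 : h p.1 ≤ h (m + 1) := by rw [← hn]; omega
    have h2 : h p.2 ≤ h (m + 1) := by rw [← hn]; omega
    exact ⟨hmono.le_iff_le.mp h1, hmono.le_iff_le.mp h2⟩
  -- injection from T into the target set
  set φ : ℕ → ℕ × ℕ := fun a => (Function.invFun h a, Function.invFun h (n - a))
    with hφdef
  have hinv : ∀ a ∈ S, h (Function.invFun h a) = a := by
    intro a ha
    apply Function.invFun_eq
    rwa [← hrange] at ha
  have himg : φ '' (T : Set ℕ) ⊆ {p : ℕ × ℕ | h p.1 + h p.2 = n} := by
    rintro p ⟨a, ha, rfl⟩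
    rw [hT] at ha
    simp only [Finset.coe_filter, Set.mem_setOf_eq, Finset.mem_range] at ha
    obtain ⟨han, haS, hnaS⟩ := ha
    simp only [Set.mem_setOf_eq, hφdef]
    rw [hinv a haS, hinv (n - a) hnaS]
    omega
  have hinj : Set.InjOn φ (T : Set ℕ) := by
    intro a ha b hb hab
    rw [hT] at ha hb
    simp only [Finset.coe_filter, Set.mem_setOf_eq, Finset.mem_range] at ha hb
    have h1 : h (Function.invFun h a) = h (Function.invFun h b) :=
      congrArg (fun p => h p.1) hab
    rwa [hinv a ha.2.1, hinv b hb.2.1] at h1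
  have key : T.card ≤ ({p : ℕ × ℕ | h p.1 + h p.2 = n} : Set (ℕ × ℕ)).ncard := by
    rw [← Set.ncard_coe_finset, ← Set.ncard_image_of_injOn hinj]
    exact Set.ncard_le_ncard himg hfin2
  have hln : h l + 1 ≤ n := by
    have : h l < n := hmono (by omega)
    omega
  omega
end

section
/- Let S ⊆ ℕ be a numerical semigroup whose complement has exactly g elements, enumerated increasingly as h₁ = 0 < h₂ < .... For any m, the number ν_m of pairs (i,j) with h_i + h_j = h_{m+1} satisfies ν_m ≥ h_{m+1} + 1 − 2g; moreover if h_{m+1} ≥ 4g − 1 then ν_m = h_{m+1} + 1 − 2g. -/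
/-- Let `S ⊆ ℕ` be a numerical semigroup (containing `0`, closed under addition)
whose complement has exactly `g` elements, enumerated increasingly as
`h 0 = 0 < h 1 < h 2 < ...`.  For any `m`, the number
`ν_m = #{(i,j) : h i + h j = h (m+1)}` satisfies `ν_m ≥ h (m+1) + 1 - 2g`;
moreover if `h (m+1) ≥ 4g - 1` then `ν_m = h (m+1) + 1 - 2g`. -/
theorem nu_bound_numerical_semigroup (S : Set ℕ) (g : ℕ)
    (h0 : 0 ∈ S) (hadd : ∀ a b : ℕ, a ∈ S → b ∈ S → a + b ∈ S)
    (hfin : (Sᶜ : Set ℕ).Finite) (hg : (Sᶜ : Set ℕ).ncard = g)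
    (h : ℕ → ℕ) (hmono : StrictMono h) (hrange : Set.range h = S)
    (m : ℕ) :
    (h (m + 1) : ℤ) + 1 - 2 * g ≤
        (({p : ℕ × ℕ | h p.1 + h p.2 = h (m + 1)} : Set (ℕ × ℕ)).ncard : ℤ) ∧
      (4 * (g : ℤ) - 1 ≤ (h (m + 1) : ℤ) →
        (({p : ℕ × ℕ | h p.1 + h p.2 = h (m + 1)} : Set (ℕ × ℕ)).ncard : ℤ) =
          (h (m + 1) : ℤ) + 1 - 2 * g) := by
  classical
  set n := h (m + 1) with hn
  have hge : ∀ k, k ≤ h k := fun k => hmono.le_apply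
  set G : Finset ℕ := hfin.toFinset with hGdef
  have hGmem : ∀ x, x ∈ G ↔ x ∉ S := by
    intro x; simp [hGdef]
  have hGcard : G.card = g := by
    rw [← hg, Set.ncard_eq_toFinset_card _ hfin]
  -- every gap f satisfies f + 1 ≤ 2g
  have hgap : ∀ f ∈ G, f + 1 ≤ 2 * g := by
    intro f hf
    have hfS : f ∉ S := (hGmem f).1 hf
    have hsub : Finset.range (f + 1) ⊆ G ∪ G.image (fun x => f - x) := by
      intro x hx
      simp only [Finset.mem_range] at hx
      by_cases hxS : x ∈ S
      · have hfx : f - x ∉ S := by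
          intro hc
          have h1 := hadd x (f - x) hxS hc
          have h2 : x + (f - x) = f := by omega
          rw [h2] at h1; exact hfS h1
        refine Finset.mem_union_right _ ?_
        exact Finset.mem_image.mpr ⟨f - x, (hGmem _).2 hfx, by omega⟩
      · exact Finset.mem_union_left _ ((hGmem x).2 hxS)
    have h1 := Finset.card_le_card hsub
    have h2 := Finset.card_union_le G (G.image (fun x => f - x))
    have h3 := Finset.card_image_le (s := G) (f := fun x => f - x)
    simp only [Finset.card_range] at h1
    omega
  set good : Finset ℕ := (Finset.range (n + 1)).filter (fun s => s ∈ S ∧ (n - s) ∈ S)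
    with hgood
  set bad : Finset ℕ := (Finset.range (n + 1)).filter (fun s => ¬(s ∈ S ∧ (n - s) ∈ S))
    with hbad
  have hsplit : good.card + bad.card = n + 1 := by
    rw [hgood, hbad, Finset.card_filter_add_card_filter_not, Finset.card_range]
  have hbadsub : bad ⊆ G ∪ G.image (fun f => n - f) := by
    intro s hs
    simp only [hbad, Finset.mem_filter, Finset.mem_range, not_and_or] at hs
    obtain ⟨hsn, hcase⟩ := hs
    rcases hcase with h1 | h2
    · exact Finset.mem_union_left _ ((hGmem s).2 h1)
    · exact Finset.mem_union_right _
        (Finset.mem_image.mpr ⟨n - s, (hGmem _).2 h2, by omega⟩)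
  have hbadle : bad.card ≤ 2 * g := by
    have h1 := Finset.card_le_card hbadsub
    have h2 := Finset.card_union_le G (G.image (fun f => n - f))
    have h3 := Finset.card_image_le (s := G) (f := fun f => n - f)
    omega
  -- the pair set is the coercion of a finset with card = good.card
  set P' : Finset (ℕ × ℕ) :=
    (Finset.range (n + 1) ×ˢ Finset.range (n + 1)).filter (fun p => h p.1 + h p.2 = n)
    with hP'
  have hPP : ({p : ℕ × ℕ | h p.1 + h p.2 = n} : Set (ℕ × ℕ)) = ↑P' := by
    ext p
    simp only [hP', Finset.coe_filter, Finset.mem_product, Finset.mem_range,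
      Set.mem_setOf_eq]
    constructor
    · intro hp
      have g1 := hge p.1
      have g2 := hge p.2
      exact ⟨⟨by omega, by omega⟩, hp⟩
    · exact fun hp => hp.2
  have hcardP : P'.card = good.card := by
    apply Finset.card_bij (fun p _ => h p.1)
    · intro p hp
      simp only [hP', Finset.mem_filter, Finset.mem_product, Finset.mem_range] at hp
      simp only [hgood, Finset.mem_filter, Finset.mem_range]
      refine ⟨by omega, ?_, ?_⟩
      · rw [← hrange]; exact ⟨p.1, rfl⟩
      · rw [← hrange]; exact ⟨p.2, by omega⟩
    · intro p hp q hq hpq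
      simp only [hP', Finset.mem_filter] at hp hq
      have h1 : p.1 = q.1 := hmono.injective hpq
      have h2 : h p.2 = h q.2 := by omega
      exact Prod.ext h1 (hmono.injective h2)
    · intro s hs
      simp only [hgood, Finset.mem_filter, Finset.mem_range] at hs
      obtain ⟨hsn, hs1, hs2⟩ := hs
      rw [← hrange] at hs1 hs2
      obtain ⟨i, hi⟩ := hs1
      obtain ⟨j, hj⟩ := hs2
      refine ⟨(i, j), ?_, hi⟩
      simp only [hP', Finset.mem_filter, Finset.mem_product, Finset.mem_range]
      have g1 := hge i
      have g2 := hge j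
      refine ⟨⟨by omega, by omega⟩, by omega⟩
  have hncard : ({p : ℕ × ℕ | h p.1 + h p.2 = n} : Set (ℕ × ℕ)).ncard = good.card := by
    rw [hPP, Set.ncard_coe_finset, hcardP]
  constructor
  · rw [hncard]; push_cast; omega
  · intro h4
    have h4' : 4 * g ≤ n + 1 := by exact_mod_cast by omega
    -- equality: bad = G ∪ image, disjoint, each card g
    have himg : (G.image (fun f => n - f)).card = g := by
      rw [Finset.card_image_of_injOn, hGcard]
      intro a ha b hb hab
      have := hgap a ha
      have := hgap b hb
      simp only at hab
      omega
    have hdisj : Disjoint G (G.image (fun f => n - f)) := by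
      rw [Finset.disjoint_left]
      intro s hs hs'
      obtain ⟨f, hf, hfs⟩ := Finset.mem_image.mp hs'
      have := hgap s hs
      have := hgap f hf
      omega
    have hsup : G ∪ G.image (fun f => n - f) ⊆ bad := by
      intro s hs
      rcases Finset.mem_union.mp hs with hs | hs
      · have hs1 := hgap s hs
        simp only [hbad, Finset.mem_filter, Finset.mem_range, not_and_or]
        exact ⟨by omega, Or.inl ((hGmem s).1 hs)⟩
      · obtain ⟨f, hf, hfs⟩ := Finset.mem_image.mp hs
        have hf1 := hgap f hf
        simp only [hbad, Finset.mem_filter, Finset.mem_range, not_and_or]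
        refine ⟨by omega, Or.inr ?_⟩
        have : n - s = f := by omega
        rw [this]; exact (hGmem f).1 hf
    have hbadeq : bad = G ∪ G.image (fun f => n - f) :=
      Finset.Subset.antisymm hbadsub hsup
    have hbadcard : bad.card = 2 * g := by
      rw [hbadeq, Finset.card_union_of_disjoint hdisj, hGcard, himg]; omega
    rw [hncard]; push_cast; omega
end
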